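/- arXiv:1909.02180 — 2 statements merged into one kernel-verified Lean document; each statement's English description precedes it below -/
import Mathlib

section
/- Pointwise optimal discriminator: for fixed nonnegative reals a_1,...,a_n (densities p_d^i(x)), b ≥ 0 (density p_g(x)), and probability vectors p_1,...,p_n, the function f(d_1,...,d_K) = (Σ_i a_i)[ log(Σ_k d_k) ] + Σ_i a_i Σ_k p_i(k) log( d_k / Σ_j d_j ) + b log(1 − Σ_k d_k), defined for d ∈ (0,1)^K with Σ_k d_k < 1, attains its maximum at d_k* = (Σ_i p_i(k) a_i) / (Σ_i a_i + b). -/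
open Real

/-!
Since each `p i` sums to one, `log (Σ_k d_k)` cancels and the integrand is the cross entropy
`Σ_k c_k log d_k + b log (1 - Σ_k d_k)` with `c_k = Σ_i p_i(k) a_i`. Adjoining the slack
`1 - Σ_k d_k` as an extra coordinate makes `d` a probability vector on `K + 1` points, and Gibbs'
inequality says that the cross entropy against the weights `(c, b)` is maximal at the normalized
weights `(c, b) / (Σ_k c_k + b)`, whose first `K` coordinates are `d*`.
-/

theorem mul_log_sub_mul_log_div_le {c l x : ℝ} (hc : 0 ≤ c) (hl : 0 < l) (hx : 0 < x) :
    c * log x - c * log (c / l) ≤ l * x - c := by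
  rcases hc.eq_or_lt with rfl | hc
  · simpa using (mul_pos hl hx).le
  have hcl : 0 < c / l := div_pos hc hl
  calc c * log x - c * log (c / l) = c * log (x / (c / l)) := by
        rw [log_div hx.ne' hcl.ne']; ring
    _ ≤ c * (x / (c / l) - 1) :=
        mul_le_mul_of_nonneg_left (log_le_sub_one_of_pos (div_pos hx hcl)) hc.le
    _ = l * x - c := by field_simp

theorem sum_mul_log_le_sum_mul_log_div_sum {ι : Type*} [Fintype ι] {w x : ι → ℝ}
    (hw : ∀ i, 0 ≤ w i) (hx : ∀ i, 0 < x i) (hx1 : ∑ i, x i ≤ 1) :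
    ∑ i, w i * log (x i) ≤ ∑ i, w i * log (w i / ∑ j, w j) := by
  rcases (Finset.sum_nonneg fun i _ => hw i).eq_or_lt with hW | hW
  · have hw0 : ∀ i, w i = 0 := fun i =>
      (Finset.sum_eq_zero_iff_of_nonneg fun j _ => hw j).mp hW.symm i (Finset.mem_univ i)
    simp [hw0]
  rw [← sub_nonpos, ← Finset.sum_sub_distrib]
  calc ∑ i, (w i * log (x i) - w i * log (w i / ∑ j, w j))
      ≤ ∑ i, ((∑ j, w j) * x i - w i) :=
        Finset.sum_le_sum fun i _ => mul_log_sub_mul_log_div_le (hw i) hW (hx i)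
    _ = (∑ j, w j) * (∑ i, x i - 1) := by
        rw [Finset.sum_sub_distrib, ← Finset.mul_sum]; ring
    _ ≤ 0 := mul_nonpos_of_nonneg_of_nonpos hW.le (by linarith)

theorem sum_mul_log_add_mul_log_one_sub_sum_le {ι : Type*} [Fintype ι] {c x : ι → ℝ} {b : ℝ}
    (hc : ∀ i, 0 ≤ c i) (hb : 0 ≤ b) (hx : ∀ i, 0 < x i) (hx1 : ∑ i, x i < 1) :
    ∑ i, c i * log (x i) + b * log (1 - ∑ i, x i)
      ≤ ∑ i, c i * log (c i / (b + ∑ j, c j)) + b * log (b / (b + ∑ j, c j)) := by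
  have h := sum_mul_log_le_sum_mul_log_div_sum (ι := Option ι)
    (w := fun o => o.elim b c) (x := fun o => o.elim (1 - ∑ i, x i) x)
    (fun o => o.rec hb hc) (fun o => o.rec (sub_pos.mpr hx1) hx) (by simp [Fintype.sum_option])
  simpa [Fintype.sum_option, add_comm] using h

theorem sum_mul_sum_mul_log_div_sum {ι κ : Type*} [Fintype ι] [Fintype κ] (a : ι → ℝ)
    {p : ι → κ → ℝ} (hpsum : ∀ i, ∑ k, p i k = 1) {e : κ → ℝ} (he : ∀ k, 0 < e k) :
    ∑ i, a i * ∑ k, p i k * log (e k / ∑ j, e j)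
      = ∑ k, (∑ i, p i k * a i) * log (e k) - (∑ i, a i) * log (∑ j, e j) := by
  have hlog : ∀ k, log (e k / ∑ j, e j) = log (e k) - log (∑ j, e j) := fun k =>
    log_div (he k).ne'
      ((he k).trans_le (Finset.single_le_sum (fun j _ => (he j).le) (Finset.mem_univ k))).ne'
  simp only [hlog, mul_sub, Finset.sum_sub_distrib, ← Finset.sum_mul, hpsum, one_mul]
  congr 1
  simp only [Finset.mul_sum, Finset.sum_mul]
  rw [Finset.sum_comm]
  exact Finset.sum_congr rfl fun k _ => Finset.sum_congr rfl fun i _ => by ring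

/-- pointwise optimal discriminator for the LLP-GAN objective: the integrand
`f(d) = (Σ_i a_i) log(Σ_k d_k) + Σ_i a_i Σ_k p_i(k) log(d_k/Σ_j d_j) + b log(1 - Σ_k d_k)`
on `{d ∈ (0,1)^K : Σ_k d_k < 1}` is maximized at `d_k* = (Σ_i p_i(k) a_i)/(Σ_i a_i + b)`. -/
theorem llp_gan_stmt4 (n K : ℕ) (a : Fin n → ℝ) (b : ℝ)
    (ha0 : ∀ i, 0 ≤ a i) (ha : ∃ i, 0 < a i) (hb : 0 ≤ b)
    (p : Fin n → Fin K → ℝ) (hp : ∀ i k, 0 < p i k) (hpsum : ∀ i, ∑ k, p i k = 1)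
    (f : (Fin K → ℝ) → ℝ)
    (hf : ∀ d, f d = (∑ i, a i) * log (∑ k, d k)
        + ∑ i, a i * ∑ k, p i k * log (d k / ∑ j, d j)
        + b * log (1 - ∑ k, d k))
    (dstar : Fin K → ℝ)
    (hdstar : ∀ k, dstar k = (∑ i, p i k * a i) / ((∑ i, a i) + b)) :
    ∀ d : Fin K → ℝ, (∀ k, 0 < d k) → (∀ k, d k < 1) → (∑ k, d k) < 1 →
      f d ≤ f dstar := by
  intro d hd0 _ hS1
  obtain ⟨i₀, hi₀⟩ := ha
  set c : Fin K → ℝ := fun k => ∑ i, p i k * a i with hc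
  have hc_pos : ∀ k, 0 < c k := fun k => Finset.sum_pos'
    (fun i _ => mul_nonneg (hp i k).le (ha0 i)) ⟨i₀, Finset.mem_univ _, mul_pos (hp i₀ k) hi₀⟩
  have hc_sum : ∑ k, c k = ∑ i, a i := by
    rw [hc, Finset.sum_comm]
    simp only [← Finset.sum_mul, hpsum, one_mul]
  have hW : 0 < b + ∑ k, c k := by
    rw [hc_sum]
    linarith [Finset.sum_pos' (fun i _ => ha0 i) ⟨i₀, Finset.mem_univ _, hi₀⟩]
  have hdstar' : ∀ k, dstar k = c k / (b + ∑ j, c j) := fun k => by rw [hdstar, hc_sum, add_comm]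
  have hslack : 1 - ∑ k, dstar k = b / (b + ∑ j, c j) := by
    rw [Finset.sum_congr rfl fun k _ => hdstar' k, ← Finset.sum_div]
    field_simp
    ring
  have hform : ∀ e : Fin K → ℝ, (∀ k, 0 < e k) →
      f e = ∑ k, c k * log (e k) + b * log (1 - ∑ k, e k) := fun e he => by
    rw [hf, sum_mul_sum_mul_log_div_sum a hpsum he]
    ring
  rw [hform d hd0, hform dstar fun k => (hdstar' k).symm ▸ div_pos (hc_pos k) hW, hslack]
  simpa only [hdstar'] using
    sum_mul_log_add_mul_log_one_sub_sum_le (fun k => (hc_pos k).le) hb hd0 hS1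
end

section
/- Generator optimality via Jensen-Shannon divergence: for densities p_d (= Σ_{i=1}^n p_d^i, total mass n) and probability density p_g, the functional C(p_g) = ∫ p_d log(p_d/(p_d+p_g)) + ∫ p_g log(p_g/(p_d+p_g)) is minimized over probability densities p_g if and only if p_g = p_d/n almost everywhere, and the minimum value is n log n − (n+1) log(n+1). -/
open MeasureTheory Real

lemma core_lem (t c : ℝ) (ht : 0 ≤ t) (hc : 0 < c) :
    t - c ≤ t * Real.log (t / c) ∧ (t * Real.log (t / c) = t - c ↔ t = c) := by
  rcases ht.eq_or_lt with h | h
  · refine ⟨by simp [← h]; linarith, ?_⟩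
    constructor
    · intro he; simp [← h] at he; linarith
    · intro he; exfalso; rw [← he] at hc; linarith [hc, h]
  · have hct : 0 < c / t := div_pos hc h
    have hinv : Real.log (t / c) = - Real.log (c / t) := by
      rw [← Real.log_inv, inv_div]
    have ht' : t * (c / t) = c := by field_simp
    have hlog : Real.log (c / t) ≤ c / t - 1 := Real.log_le_sub_one_of_pos hct
    have h3 : t * Real.log (c / t) ≤ c - t := by
      nlinarith [mul_le_mul_of_nonneg_left hlog h.le]
    constructor
    · rw [hinv]
      have : t * -Real.log (c / t) = -(t * Real.log (c / t)) := by ring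
      linarith
    · constructor
      · intro he
        by_contra hne
        have hne' : c / t ≠ 1 := by
          intro h1
          exact hne ((div_eq_one_iff_eq h.ne').mp h1).symm
        have hstrict : Real.log (c / t) < c / t - 1 := Real.log_lt_sub_one_of_pos hct hne'
        have h4 : t * Real.log (c / t) < c - t := by
          nlinarith [mul_lt_mul_of_pos_left hstrict h]
        rw [hinv] at he
        have : t * -Real.log (c / t) = -(t * Real.log (c / t)) := by ring
        rw [this] at he
        linarith
      · intro he
        subst he
        rw [div_self hc.ne', Real.log_one]
        ring

lemma key_lem (n : ℝ) (hn : 1 ≤ n) (a b : ℝ) (ha : 0 ≤ a) (hb : 0 ≤ b) :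
    (a * (Real.log n - Real.log (n + 1)) - b * Real.log (n + 1) ≤
      a * Real.log (a / (a + b)) + b * Real.log (b / (a + b))) ∧
    (a * Real.log (a / (a + b)) + b * Real.log (b / (a + b)) =
      a * (Real.log n - Real.log (n + 1)) - b * Real.log (n + 1) ↔ a = n * b) := by
  have hn0 : (0:ℝ) < n := by linarith
  have hn1 : (0:ℝ) < n + 1 := by linarith
  rcases eq_or_lt_of_le (add_nonneg ha hb) with hs | hs
  · have ha0 : a = 0 := by linarith
    have hb0 : b = 0 := by linarith
    simp [ha0, hb0]
  · have hc1 : 0 < n * (a + b) / (n + 1) := by positivity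
    have hc2 : 0 < (a + b) / (n + 1) := by positivity
    obtain ⟨ineq1, eq1⟩ := core_lem a (n * (a + b) / (n + 1)) ha hc1
    obtain ⟨ineq2, eq2⟩ := core_lem b ((a + b) / (n + 1)) hb hc2
    have e1 : a * Real.log (a / (n * (a + b) / (n + 1))) =
        a * Real.log (a / (a + b)) - a * (Real.log n - Real.log (n + 1)) := by
      rcases ha.eq_or_lt with h | h
      · simp [← h]
      · have hx : a / (n * (a + b) / (n + 1)) = (a / (a + b)) * ((n + 1) / n) := by
          field_simp
        rw [hx, Real.log_mul (by positivity) (by positivity),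
          Real.log_div hn1.ne' hn0.ne']
        ring
    have e2 : b * Real.log (b / ((a + b) / (n + 1))) =
        b * Real.log (b / (a + b)) + b * Real.log (n + 1) := by
      rcases hb.eq_or_lt with h | h
      · simp [← h]
      · have hx : b / ((a + b) / (n + 1)) = (b / (a + b)) * (n + 1) := by
          field_simp
        rw [hx, Real.log_mul (by positivity) hn1.ne']
        ring
    have hsum : a - n * (a + b) / (n + 1) + (b - (a + b) / (n + 1)) = 0 := by
      field_simp
      ring
    refine ⟨by linarith, ?_, ?_⟩
    · intro heq
      have h1 : a * Real.log (a / (n * (a + b) / (n + 1))) = a - n * (a + b) / (n + 1) := by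
        linarith
      have hA := eq1.mp h1
      have hA' : a * (n + 1) = n * (a + b) := by
        field_simp at hA
        linarith
      linear_combination hA'
    · intro heq
      have ha2 : a = n * (a + b) / (n + 1) := by
        rw [heq]; field_simp
      have hb2 : b = (a + b) / (n + 1) := by
        rw [heq]; field_simp
      have h1 := eq1.mpr ha2
      have h2 := eq2.mpr hb2
      linarith

/-- generator optimality via Jensen–Shannon divergence: with `p_d` of total
mass `n`, the functional `C(p_g) = ∫ p_d log(p_d/(p_d+p_g)) + ∫ p_g log(p_g/(p_d+p_g))` is
minimized over probability densities `p_g` iff `p_g = p_d/n` a.e., with minimum value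
`n log n - (n+1) log (n+1)`. -/
theorem llp_gan_stmt8 {X : Type*} [MeasurableSpace X] (ν : Measure X)
    (n : ℕ) (hn : 1 ≤ n)
    (pd : X → ℝ) (hpdmeas : Measurable pd) (hpd0 : ∀ x, 0 ≤ pd x)
    (hpdint : Integrable pd ν) (hpdmass : ∫ x, pd x ∂ν = (n : ℝ))
    (C : (X → ℝ) → ℝ)
    (hC : ∀ f, C f = ∫ x, pd x * log (pd x / (pd x + f x)) ∂ν
        + ∫ x, f x * log (f x / (pd x + f x)) ∂ν)
    (Adm : (X → ℝ) → Prop)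
    (hAdm : ∀ f, Adm f ↔
      (Measurable f ∧ (∀ x, 0 ≤ f x) ∧ Integrable f ν ∧ (∫ x, f x ∂ν = 1) ∧
        Integrable (fun x => pd x * log (pd x / (pd x + f x))) ν ∧
        Integrable (fun x => f x * log (f x / (pd x + f x))) ν)) :
    C (fun x => pd x / n) = n * log n - (n + 1) * log (n + 1) ∧
      ∀ f, Adm f →
        (C (fun x => pd x / n) ≤ C f ∧
          (C f = n * log n - (n + 1) * log (n + 1) ↔
            f =ᵐ[ν] fun x => pd x / n)) := by
  have hn1R : (1:ℝ) ≤ (n:ℝ) := by exact_mod_cast hn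
  have hnpos : (0:ℝ) < (n:ℝ) := by linarith
  have hn1pos : (0:ℝ) < (n:ℝ) + 1 := by linarith
  have hCmin : C (fun x => pd x / n) = n * Real.log n - ((n:ℝ) + 1) * Real.log ((n:ℝ) + 1) := by
    rw [hC]
    have e1 : ∀ x, pd x * Real.log (pd x / (pd x + pd x / n)) =
        pd x * (Real.log n - Real.log ((n:ℝ) + 1)) := by
      intro x
      rcases (hpd0 x).eq_or_lt with h | h
      · simp [← h]
      · have hx : pd x / (pd x + pd x / n) = (n:ℝ) / ((n:ℝ) + 1) := by
          rw [div_eq_div_iff (by positivity) (by positivity)]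
          field_simp
        rw [hx, Real.log_div hnpos.ne' hn1pos.ne']
    have e2 : ∀ x, (pd x / n) * Real.log ((pd x / n) / (pd x + pd x / n)) =
        (pd x / n) * (-Real.log ((n:ℝ) + 1)) := by
      intro x
      rcases (hpd0 x).eq_or_lt with h | h
      · simp [← h]
      · have hx : (pd x / n) / (pd x + pd x / n) = ((n:ℝ) + 1)⁻¹ := by
          rw [div_eq_iff (by positivity)]
          field_simp
        rw [hx, Real.log_inv]
    simp only [e1, e2]
    rw [integral_mul_const, integral_mul_const, integral_div, hpdmass,
      div_self hnpos.ne']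
    ring
  refine ⟨hCmin, fun f hf => ?_⟩
  rw [hAdm] at hf
  obtain ⟨hfm, hf0, hfi, hfmass, hi1, hi2⟩ := hf
  have hpt : ∀ x, pd x * (Real.log n - Real.log ((n:ℝ) + 1)) - f x * Real.log ((n:ℝ) + 1) ≤
      pd x * Real.log (pd x / (pd x + f x)) + f x * Real.log (f x / (pd x + f x)) :=
    fun x => (key_lem (n:ℝ) hn1R (pd x) (f x) (hpd0 x) (hf0 x)).1
  have hpteq : ∀ x, pd x * Real.log (pd x / (pd x + f x)) + f x * Real.log (f x / (pd x + f x)) =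
      pd x * (Real.log n - Real.log ((n:ℝ) + 1)) - f x * Real.log ((n:ℝ) + 1) ↔
      pd x = (n:ℝ) * f x :=
    fun x => (key_lem (n:ℝ) hn1R (pd x) (f x) (hpd0 x) (hf0 x)).2
  have hLint : Integrable (fun x => pd x * (Real.log n - Real.log ((n:ℝ) + 1))
      - f x * Real.log ((n:ℝ) + 1)) ν :=
    (hpdint.mul_const _).sub (hfi.mul_const _)
  have hgint : Integrable (fun x => pd x * Real.log (pd x / (pd x + f x))
      + f x * Real.log (f x / (pd x + f x))) ν := hi1.add hi2
  have hLval : ∫ x, (pd x * (Real.log n - Real.log ((n:ℝ) + 1))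
      - f x * Real.log ((n:ℝ) + 1)) ∂ν
      = (n:ℝ) * Real.log n - ((n:ℝ) + 1) * Real.log ((n:ℝ) + 1) := by
    rw [integral_sub (hpdint.mul_const _) (hfi.mul_const _), integral_mul_const,
      integral_mul_const, hpdmass, hfmass]
    ring
  have hCf : C f = ∫ x, (pd x * Real.log (pd x / (pd x + f x))
      + f x * Real.log (f x / (pd x + f x))) ∂ν := by
    rw [hC, ← integral_add hi1 hi2]
  constructor
  · rw [hCmin, hCf, ← hLval]
    exact integral_mono hLint hgint hpt
  · rw [hCf, ← hLval]
    constructor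
    · intro h
      have hz : ∫ x, ((pd x * Real.log (pd x / (pd x + f x))
          + f x * Real.log (f x / (pd x + f x)))
          - (pd x * (Real.log n - Real.log ((n:ℝ) + 1)) - f x * Real.log ((n:ℝ) + 1))) ∂ν = 0 := by
        rw [integral_sub hgint hLint, h, sub_self]
      have hnn : (0 : X → ℝ) ≤ fun x => (pd x * Real.log (pd x / (pd x + f x))
          + f x * Real.log (f x / (pd x + f x)))
          - (pd x * (Real.log n - Real.log ((n:ℝ) + 1)) - f x * Real.log ((n:ℝ) + 1)) :=
        fun x => sub_nonneg.mpr (hpt x)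
      have hae := (integral_eq_zero_iff_of_nonneg hnn (hgint.sub hLint)).mp hz
      filter_upwards [hae] with x hx
      have hgl : pd x * Real.log (pd x / (pd x + f x)) + f x * Real.log (f x / (pd x + f x)) =
          pd x * (Real.log n - Real.log ((n:ℝ) + 1)) - f x * Real.log ((n:ℝ) + 1) := by
        have : _ = (0 : ℝ) := hx
        linarith [sub_eq_zero.mp this]
      have hp := (hpteq x).mp hgl
      rw [hp]
      field_simp
    · intro h
      have hcong : (fun x => pd x * Real.log (pd x / (pd x + f x))
          + f x * Real.log (f x / (pd x + f x))) =ᵐ[ν]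
          fun x => pd x * (Real.log n - Real.log ((n:ℝ) + 1)) - f x * Real.log ((n:ℝ) + 1) := by
        filter_upwards [h] with x hx
        exact (hpteq x).mpr (by rw [hx]; field_simp)
      exact integral_congr_ae hcong
end
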